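/- arXiv:2408.06733 — 2 statements merged into one kernel-verified Lean document; each statement's English description precedes it below -/
import Mathlib

section
/- Let V, U, W be real Hilbert spaces, a_f : V × V → ℝ and a_s : U × U → ℝ bounded bilinear forms with coercivity constants c_f > 0 and c_s > 0, b : V × U → ℝ and m : W × U → ℝ bounded bilinear forms, and F_f ∈ V*, F_s ∈ U* fixed. For ϑ ∈ W let u(ϑ) ∈ U denote the second component of the unique solution (v,u) of the system a_f(v,w) = F_f(w) for all w ∈ V, a_s(u,w) + b(v,w) + m(ϑ,w) = F_s(w) for all w ∈ U. Then the map ϑ ↦ u(ϑ) is affine, i.e. u(tϑ₁ + (1−t)ϑ₂) = t·u(ϑ₁) + (1−t)·u(ϑ₂) for all t ∈ ℝ and ϑ₁, ϑ₂ ∈ W, and it is Lipschitz continuous with ‖u(ϑ₁) − u(ϑ₂)‖ ≤ (‖m‖/c_s)·‖ϑ₁ − ϑ₂‖. -/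
/-- Properties of the solution operator `ϑ ↦ u(ϑ)` of Lemma 3.1:
the solid displacement depends affinely and Lipschitz-continuously
on the prescribed temperature profile. -/
theorem stmt_2
    {V U W : Type*}
    [NormedAddCommGroup V] [InnerProductSpace ℝ V] [CompleteSpace V]
    [NormedAddCommGroup U] [InnerProductSpace ℝ U] [CompleteSpace U]
    [NormedAddCommGroup W] [InnerProductSpace ℝ W] [CompleteSpace W]
    (a_f : V →L[ℝ] V →L[ℝ] ℝ) (a_s : U →L[ℝ] U →L[ℝ] ℝ)
    (c_f c_s : ℝ) (hcf : 0 < c_f) (hcs : 0 < c_s)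
    (hcoer_f : ∀ v : V, a_f v v ≥ c_f * ‖v‖ ^ 2)
    (hcoer_s : ∀ u : U, a_s u u ≥ c_s * ‖u‖ ^ 2)
    (b : V →L[ℝ] U →L[ℝ] ℝ) (m : W →L[ℝ] U →L[ℝ] ℝ)
    (F_f : V →L[ℝ] ℝ) (F_s : U →L[ℝ] ℝ)
    (u : W → U)
    (hu : ∀ ϑ : W, ∃ v : V,
      (∀ w : V, a_f v w = F_f w) ∧
      (∀ w : U, a_s (u ϑ) w + b v w + m ϑ w = F_s w)) :
    (∀ (t : ℝ) (ϑ₁ ϑ₂ : W),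
      u (t • ϑ₁ + (1 - t) • ϑ₂) = t • u ϑ₁ + (1 - t) • u ϑ₂) ∧
    (∀ ϑ₁ ϑ₂ : W, ‖u ϑ₁ - u ϑ₂‖ ≤ (‖m‖ / c_s) * ‖ϑ₁ - ϑ₂‖) := by
  -- uniqueness from coercivity of a_s
  have uniq : ∀ x y : U, (∀ w : U, a_s x w = a_s y w) → x = y := by
    intro x y h
    have h0 : a_s (x - y) (x - y) = 0 := by
      have hx := h x; have hy := h y
      simp only [map_sub, ContinuousLinearMap.sub_apply]
      linarith
    have hc := hcoer_s (x - y)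
    rw [h0] at hc
    have hsq : ‖x - y‖ ^ 2 ≤ 0 := by nlinarith [sq_nonneg ‖x - y‖]
    have hn : ‖x - y‖ ≤ 0 := by nlinarith [norm_nonneg (x - y)]
    have hz : x - y = 0 := by rwa [← norm_le_zero_iff]
    rwa [sub_eq_zero] at hz
  -- uniqueness from coercivity of a_f
  have uniqf : ∀ x y : V, (∀ w : V, a_f x w = a_f y w) → x = y := by
    intro x y h
    have h0 : a_f (x - y) (x - y) = 0 := by
      have hx := h x; have hy := h y
      simp only [map_sub, ContinuousLinearMap.sub_apply]
      linarith
    have hc := hcoer_f (x - y)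
    rw [h0] at hc
    have hsq : ‖x - y‖ ^ 2 ≤ 0 := by nlinarith [sq_nonneg ‖x - y‖]
    have hn : ‖x - y‖ ≤ 0 := by nlinarith [norm_nonneg (x - y)]
    have hz : x - y = 0 := by rwa [← norm_le_zero_iff]
    rwa [sub_eq_zero] at hz
  -- key difference identity
  have hdiff : ∀ (ϑ₁ ϑ₂ : W) (w : U),
      a_s (u ϑ₁ - u ϑ₂) w = - m (ϑ₁ - ϑ₂) w := by
    intro ϑ₁ ϑ₂ w
    obtain ⟨v₁, hf1, hs1⟩ := hu ϑ₁
    obtain ⟨v₂, hf2, hs2⟩ := hu ϑ₂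
    have hv : v₁ = v₂ := uniqf _ _ (fun w => (hf1 w).trans (hf2 w).symm)
    subst hv
    have e1 := hs1 w
    have e2 := hs2 w
    simp only [map_sub, ContinuousLinearMap.sub_apply] at *
    linarith
  constructor
  · intro t ϑ₁ ϑ₂
    set ϑ : W := t • ϑ₁ + (1 - t) • ϑ₂ with hϑ
    apply uniq
    intro w
    have h1 := hdiff ϑ ϑ₂ w
    have h2 := hdiff ϑ₁ ϑ₂ w
    have hw : ϑ - ϑ₂ = t • (ϑ₁ - ϑ₂) := by
      rw [hϑ]; module
    rw [hw] at h1
    simp only [map_add, map_smul, ContinuousLinearMap.add_apply,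
      ContinuousLinearMap.smul_apply, smul_eq_mul] at h1 h2 ⊢
    have h1' : a_s (u ϑ) w - a_s (u ϑ₂) w = -(t * m (ϑ₁ - ϑ₂) w) := by
      have := hdiff ϑ ϑ₂ w
      rw [hw] at this
      simpa [map_sub, ContinuousLinearMap.sub_apply] using this
    have h2' : a_s (u ϑ₁) w - a_s (u ϑ₂) w = -(m (ϑ₁ - ϑ₂) w) := by
      simpa [map_sub, ContinuousLinearMap.sub_apply] using hdiff ϑ₁ ϑ₂ w
    linear_combination h1' - t * h2'
  · intro ϑ₁ ϑ₂
    set d : U := u ϑ₁ - u ϑ₂ with hd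
    have h1 : a_s d d = - m (ϑ₁ - ϑ₂) d := hdiff ϑ₁ ϑ₂ d
    have h2 : c_s * ‖d‖ ^ 2 ≤ a_s d d := hcoer_s d
    have h3 : - m (ϑ₁ - ϑ₂) d ≤ ‖m‖ * ‖ϑ₁ - ϑ₂‖ * ‖d‖ := by
      calc - m (ϑ₁ - ϑ₂) d ≤ |m (ϑ₁ - ϑ₂) d| := neg_le_abs _
        _ = ‖m (ϑ₁ - ϑ₂) d‖ := rfl
        _ ≤ ‖m (ϑ₁ - ϑ₂)‖ * ‖d‖ := (m (ϑ₁ - ϑ₂)).le_opNorm d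
        _ ≤ ‖m‖ * ‖ϑ₁ - ϑ₂‖ * ‖d‖ := by
            gcongr
            exact m.le_opNorm _
    have key : c_s * ‖d‖ ^ 2 ≤ ‖m‖ * ‖ϑ₁ - ϑ₂‖ * ‖d‖ := by linarith
    rcases eq_or_lt_of_le (norm_nonneg d) with h0 | h0
    · rw [← h0]
      positivity
    · rw [div_mul_eq_mul_div, le_div_iff₀ hcs]
      nlinarith [sq_nonneg ‖d‖]
end

section
/- Let Da, λ₁, φ_f, a₁, a₂ be positive real constants, let α > 0 satisfy Da·(2 + λ₁ + φ_f²/a₁)·α² = 1, and let v(x) = cosh(α(1−x))/cosh(α). Define the pressure P : ℝ → ℝ by P(x) = (a₂ − φ_f·v'(x))/a₁. Then for all x ∈ [0,1] the pair (v, P) satisfies the reduced one-dimensional hydrodynamic system: −(2 + λ₁)·v''(x) + φ_f·P'(x) + v(x)/Da = 0 and φ_f·v'(x) + a₁·P(x) = a₂. -/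
/-! Since `v'' = α² v` and the mass balance gives `P' = -(φ_f / a₁) v''`, the momentum balance
reduces to `v · (1 / Da - α² (2 + λ₁ + φ_f² / a₁)) = 0`, which is the defining relation of `α`. -/

open Real

lemma hasDerivAt_mul_one_sub (α x : ℝ) : HasDerivAt (fun y => α * (1 - y)) (-α) x := by
  simpa using ((hasDerivAt_id x).const_sub 1).const_mul α

lemma deriv_cosh_mul_one_sub (α : ℝ) :
    deriv (fun x => cosh (α * (1 - x))) = fun x => -α * sinh (α * (1 - x)) := by
  funext x
  rw [(hasDerivAt_mul_one_sub α x).cosh.deriv, mul_comm]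

lemma deriv_sinh_mul_one_sub (α : ℝ) :
    deriv (fun x => sinh (α * (1 - x))) = fun x => -α * cosh (α * (1 - x)) := by
  funext x
  rw [(hasDerivAt_mul_one_sub α x).sinh.deriv, mul_comm]

lemma deriv_deriv_cosh_mul_one_sub_div (α c : ℝ) :
    deriv (deriv fun x => cosh (α * (1 - x)) / c) = fun x => α ^ 2 * (cosh (α * (1 - x)) / c) := by
  have hv' : (deriv fun x => cosh (α * (1 - x)) / c) = fun x => -α * sinh (α * (1 - x)) / c := by
    funext x
    rw [deriv_div_const, deriv_cosh_mul_one_sub]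
  funext x
  rw [hv', deriv_div_const, deriv_const_mul_field', deriv_sinh_mul_one_sub]
  ring

lemma deriv_const_sub_mul_div (a b c : ℝ) (f : ℝ → ℝ) (x : ℝ) :
    deriv (fun y => (a - b * f y) / c) x = -(b / c) * deriv f x := by
  rw [deriv_div_const, deriv_const_sub, deriv_const_mul_field']
  ring

theorem stmt_8_general
    (Da lam1 phif a1 a2 : ℝ)
    (ha1 : 0 < a1)
    (α : ℝ)
    (hαeq : Da * (2 + lam1 + phif ^ 2 / a1) * α ^ 2 = 1) :
    let v : ℝ → ℝ := fun x => Real.cosh (α * (1 - x)) / Real.cosh α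
    let P : ℝ → ℝ := fun x => (a2 - phif * deriv v x) / a1
    ∀ x ∈ Set.Icc (0 : ℝ) 1,
      -(2 + lam1) * deriv (deriv v) x + phif * deriv P x + v x / Da = 0 ∧
      phif * deriv v x + a1 * P x = a2 := by
  intro v P x _
  have hv'' : deriv (deriv v) x = α ^ 2 * v x := by
    rw [deriv_deriv_cosh_mul_one_sub_div]
  have hP' : deriv P x = -(phif / a1) * deriv (deriv v) x := deriv_const_sub_mul_div _ _ _ _ x
  have hDa : Da ≠ 0 := by
    rintro rfl
    simp at hαeq
  refine ⟨?_, ?_⟩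
  · rw [hP', hv'']
    field_simp at hαeq ⊢
    linear_combination (-v x) * hαeq
  · simp only [P]
    field_simp
    ring

/-- The pair `(v, P)` with `v(x) = cosh(α(1−x))/cosh(α)` and
`P(x) = (a₂ − φ_f·v'(x))/a₁` solves the reduced 1D hydrodynamic system:
the fluid momentum balance and the fluid mass balance. -/
theorem stmt_8
    (Da lam1 phif a1 a2 : ℝ) (hDa : 0 < Da) (hlam1 : 0 < lam1)
    (hphif : 0 < phif) (ha1 : 0 < a1) (ha2 : 0 < a2)
    (α : ℝ) (hα : 0 < α)
    (hαeq : Da * (2 + lam1 + phif ^ 2 / a1) * α ^ 2 = 1) :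
    let v : ℝ → ℝ := fun x => Real.cosh (α * (1 - x)) / Real.cosh α
    let P : ℝ → ℝ := fun x => (a2 - phif * deriv v x) / a1
    ∀ x ∈ Set.Icc (0 : ℝ) 1,
      -(2 + lam1) * deriv (deriv v) x + phif * deriv P x + v x / Da = 0 ∧
      phif * deriv v x + a1 * P x = a2 :=
  stmt_8_general Da lam1 phif a1 a2 ha1 α hαeq
end
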